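/- Let G be a non-simple loop-free multigraph that cannot be transformed into a smaller graph by any finite sequence of admissible double edge swaps (with respect to the order on graphs determined by the maximal non-simple edge and its multiplicity). Then the degree sequence of G is not graphical; equivalently, it violates some Erdős–Gallai inequality d1+...+dk ≤ k(k−1) + Σ_{i=k+1}^n min(di,k). -/
import Mathlib


open Finset

/-- A loopy multigraph on vertex set `V`: each unordered pair (possibly a loop)
has a multiplicity. -/
abbrev Multigraph (V : Type*) := Sym2 V → ℕ

variable {V : Type*}

/-- The degree of a vertex: each incident edge counts with multiplicity,
and a loop counts twice. -/
def mdeg [Fintype V] (G : Multigraph V) (v : V) : ℕ :=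
  (∑ u : V, G s(v, u)) + G s(v, v)

/-- A multigraph is simple if it has no loops and every multiplicity is at most one. -/
def IsSimpleMG (G : Multigraph V) : Prop :=
  (∀ v : V, G s(v, v) = 0) ∧ ∀ e : Sym2 V, G e ≤ 1

/-- A multigraph is loop-free if it has no loops. -/
def LoopFree (G : Multigraph V) : Prop := ∀ v : V, G s(v, v) = 0

/-- A degree function is graphical if it is realized by some simple graph. -/
def GraphicalDeg [Fintype V] (d : V → ℕ) : Prop :=
  ∃ H : Multigraph V, IsSimpleMG H ∧ ∀ v : V, mdeg H v = d v

/-- The result of the double edge swap removing one copy each of `{v1,v2}` and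
`{v3,v4}` and adding one copy each of `{v2,v3}` and `{v4,v1}`. -/
def swapped [DecidableEq V] (G : Multigraph V) (v1 v2 v3 v4 : V) : Multigraph V :=
  fun e => G e - (if e = s(v1, v2) then 1 else 0) - (if e = s(v3, v4) then 1 else 0)
    + (if e = s(v2, v3) then 1 else 0) + (if e = s(v4, v1) then 1 else 0)

/-- The edges `{v1,v2}` and `{v3,v4}` share no vertex. -/
def NotIncident (v1 v2 v3 v4 : V) : Prop :=
  v1 ≠ v3 ∧ v1 ≠ v4 ∧ v2 ≠ v3 ∧ v2 ≠ v4

/-- One admissible double edge swap: the two removed edges exist, are not incident,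
and at least one of them is a loop or has multiplicity at least two. -/
def AdmissibleStep [DecidableEq V] (G G' : Multigraph V) : Prop :=
  ∃ v1 v2 v3 v4 : V, NotIncident v1 v2 v3 v4 ∧
    1 ≤ G s(v1, v2) ∧ 1 ≤ G s(v3, v4) ∧
    (v1 = v2 ∨ v3 = v4 ∨ 2 ≤ G s(v1, v2) ∨ 2 ≤ G s(v3, v4)) ∧
    G' = swapped G v1 v2 v3 v4

/-- The larger endpoint of an unordered pair. -/
def pmax [LinearOrder V] (p : Sym2 V) : V :=
  Sym2.lift ⟨fun a b => max a b, fun a b => max_comm a b⟩ p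

/-- The smaller endpoint of an unordered pair. -/
def pmin [LinearOrder V] (p : Sym2 V) : V :=
  Sym2.lift ⟨fun a b => min a b, fun a b => min_comm a b⟩ p

/-- Order on unordered pairs: compare larger endpoints, then smaller endpoints. -/
def PairLT [LinearOrder V] (p q : Sym2 V) : Prop :=
  pmax p < pmax q ∨ (pmax p = pmax q ∧ pmin p < pmin q)

def PairLE [LinearOrder V] (p q : Sym2 V) : Prop := p = q ∨ PairLT p q

/-- The pair `p` carries a non-simple edge of `G`: a multiple edge or a loop. -/
def NonSimpleAt (G : Multigraph V) (p : Sym2 V) : Prop :=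
  2 ≤ G p ∨ (p.IsDiag ∧ 1 ≤ G p)

/-- `p` is the maximal non-simple edge of `G`. -/
def MaxNonSimple [LinearOrder V] (G : Multigraph V) (p : Sym2 V) : Prop :=
  NonSimpleAt G p ∧ ∀ q : Sym2 V, NonSimpleAt G q → PairLE q p

/-- The strict partial order on multigraphs with fixed degrees: `G < H` iff `H` is
non-simple and its maximal non-simple edge is larger than all non-simple edges of `G`,
or the maximal non-simple edges agree but have strictly larger multiplicity in `H`. -/
def GraphLT [LinearOrder V] (G H : Multigraph V) : Prop :=
  ∃ p : Sym2 V, MaxNonSimple H p ∧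
    ((∀ q : Sym2 V, NonSimpleAt G q → PairLT q p) ∨ (MaxNonSimple G p ∧ G p < H p))


-- ### Auxiliary development

section EGAux
variable {V : Type*}

private lemma sym2_ne {x y u v : V} (h1 : x ≠ u ∨ y ≠ v) (h2 : x ≠ v ∨ y ≠ u) :
    s(x,y) ≠ s(u,v) := by
  rw [Ne, Sym2.eq_iff]
  rintro (⟨rfl, rfl⟩ | ⟨rfl, rfl⟩)
  · rcases h1 with h | h <;> exact h rfl
  · rcases h2 with h | h <;> exact h rfl

private lemma diag_zero {G : Multigraph V} (hlf : LoopFree G) {q : Sym2 V} (h : q.IsDiag) :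
    G q = 0 := by
  induction q using Sym2.ind with
  | _ x y => rw [Sym2.mk_isDiag_iff] at h; rw [h]; exact hlf y

section Order
variable [LinearOrder V]

private lemma pmax_mk (x y : V) : pmax s(x,y) = max x y := rfl
private lemma pmin_mk (x y : V) : pmin s(x,y) = min x y := rfl

private def pkey (q : Sym2 V) : V ×ₗ V := toLex (pmax q, pmin q)

private lemma sym2_eta (q : Sym2 V) : s(pmin q, pmax q) = q := by
  induction q using Sym2.ind with
  | _ x y =>
    rcases le_total x y with h | h
    · rw [pmin_mk, pmax_mk, min_eq_left h, max_eq_right h]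
    · rw [pmin_mk, pmax_mk, min_eq_right h, max_eq_left h, Sym2.eq_swap]

private lemma pkey_inj {q r : Sym2 V} (h : pkey q = pkey r) : q = r := by
  have h' : (pmax q, pmin q) = (pmax r, pmin r) := by simpa [pkey] using h
  have h1 : pmax q = pmax r := congrArg Prod.fst h'
  have h2 : pmin q = pmin r := congrArg Prod.snd h'
  rw [← sym2_eta q, ← sym2_eta r, h1, h2]

private lemma pairLT_iff_key {q r : Sym2 V} : PairLT q r ↔ pkey q < pkey r := by
  rw [pkey, pkey, Prod.Lex.lt_iff]; rfl

private lemma pairLE_iff_key {q r : Sym2 V} : PairLE q r ↔ pkey q ≤ pkey r := by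
  constructor
  · rintro (rfl | h)
    · exact le_refl _
    · exact le_of_lt (pairLT_iff_key.mp h)
  · intro h
    rcases lt_or_eq_of_le h with h | h
    · exact Or.inr (pairLT_iff_key.mpr h)
    · exact Or.inl (pkey_inj h)

end Order

section Ctx
variable [LinearOrder V] {G : Multigraph V} {a b : V}

private lemma nonsimple_le (hlf : LoopFree G)
    (hqmax : ∀ q, 2 ≤ G q → PairLE q s(a,b)) :
    ∀ q, NonSimpleAt G q → PairLE q s(a,b) := by
  rintro q (h | ⟨hd, h⟩)
  · exact hqmax q h
  · rw [diag_zero hlf hd] at h; omega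

private lemma simple_above (hqmax : ∀ q, 2 ≤ G q → PairLE q s(a,b))
    {q : Sym2 V} (h : PairLT s(a,b) q) : G q ≤ 1 := by
  by_contra hc
  have h2 := (pairLE_iff_key.mp (hqmax q (by omega)))
  exact absurd (pairLT_iff_key.mp h) (not_lt.mpr h2)

/-- multiplicities of pairs strictly between `a` and `b`, against `b` -/
private lemma simple_bx (hab : a < b) (hqmax : ∀ q, 2 ≤ G q → PairLE q s(a,b))
    {x : V} (hax : a < x) (hxb : x ≠ b) : G s(b,x) ≤ 1 := by
  refine simple_above hqmax ?_
  rcases hxb.lt_or_gt with h | h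
  · refine Or.inr ⟨?_, ?_⟩
    · rw [pmax_mk, pmax_mk, max_eq_right hab.le, max_eq_left h.le]
    · rw [pmin_mk, pmin_mk, min_eq_left hab.le, min_eq_right h.le]
      exact hax
  · refine Or.inl ?_
    rw [pmax_mk, pmax_mk, max_eq_right hab.le]
    exact lt_of_lt_of_le h (le_max_right b x)

/-- pairs with one endpoint above `b` are simple -/
private lemma simple_top (hab : a < b) (hqmax : ∀ q, 2 ≤ G q → PairLE q s(a,b))
    {x v : V} (hv : b < v) : G s(x,v) ≤ 1 := by
  refine simple_above hqmax (Or.inl ?_)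
  rw [pmax_mk, pmax_mk, max_eq_right hab.le]
  exact lt_of_lt_of_le hv (le_max_right x v)

private lemma smaller_of (hlf : LoopFree G) (hm : 2 ≤ G s(a,b))
    (hqmax : ∀ q, 2 ≤ G q → PairLE q s(a,b))
    {G' : Multigraph V} (h1 : G' s(a,b) < G s(a,b))
    (h2 : ∀ q, NonSimpleAt G' q → PairLE q s(a,b)) : GraphLT G' G := by
  refine ⟨s(a,b), ⟨Or.inl hm, nonsimple_le hlf hqmax⟩, ?_⟩
  by_cases hns : NonSimpleAt G' s(a,b)
  · exact Or.inr ⟨⟨hns, h2⟩, h1⟩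
  · refine Or.inl fun q hq => ?_
    rcases h2 q hq with rfl | h
    · exact absurd hq hns
    · exact h

omit [LinearOrder V] in
private lemma swapped_le {v1 v2 v3 v4 : V} [DecidableEq V] {e : Sym2 V}
    (h3 : e ≠ s(v2,v3)) (h4 : e ≠ s(v4,v1)) :
    swapped G v1 v2 v3 v4 e ≤ G e := by
  rw [swapped, if_neg h3, if_neg h4]
  omega

private lemma lemB (hlf : LoopFree G)
    (hmin : ∀ G' : Multigraph V, Relation.ReflTransGen AdmissibleStep G G' → ¬ GraphLT G' G)
    (hab : a < b) (hm : 2 ≤ G s(a,b))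
    (hqmax : ∀ q, 2 ≤ G q → PairLE q s(a,b))
    {c d : V} (hca : c ≠ a) (hcb : c ≠ b) (hda : d ≠ a) (hdb : d ≠ b) (hcd : c ≠ d)
    (he : 1 ≤ G s(c,d)) :
    (a < c ∧ 1 ≤ G s(b,c)) ∨ (b < d ∧ 1 ≤ G s(a,d)) := by
  by_contra hcon
  push_neg at hcon
  obtain ⟨hcon1, hcon2⟩ := hcon
  set G' := swapped G a b c d with hG'
  have hstep : AdmissibleStep G G' :=
    ⟨a, b, c, d, ⟨hca.symm, hda.symm, hcb.symm, hdb.symm⟩, by omega, he,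
      Or.inr (Or.inr (Or.inl hm)), rfl⟩
  refine hmin G' (Relation.ReflTransGen.single hstep) ?_
  have ne1 : s(a,b) ≠ s(c,d) := sym2_ne (Or.inl hca.symm) (Or.inl hda.symm)
  have ne2 : s(a,b) ≠ s(b,c) := sym2_ne (Or.inl hab.ne) (Or.inl hca.symm)
  have ne3 : s(a,b) ≠ s(d,a) := sym2_ne (Or.inl hda.symm) (Or.inr hdb.symm)
  have hval : G' s(a,b) = G s(a,b) - 1 := by
    rw [hG', swapped, if_pos rfl, if_neg ne1, if_neg ne2, if_neg ne3]; omega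
  refine smaller_of hlf hm hqmax (by omega) ?_
  intro q hq
  by_cases hq1 : q = s(b,c)
  · subst hq1
    have e1 : s(b,c) ≠ s(a,b) := sym2_ne (Or.inl hab.ne') (Or.inr hca)
    have e2 : s(b,c) ≠ s(c,d) := sym2_ne (Or.inl hcb.symm) (Or.inl hdb.symm)
    have e3 : s(b,c) ≠ s(d,a) := sym2_ne (Or.inl hdb.symm) (Or.inl hab.ne')
    have hv : G' s(b,c) = G s(b,c) + 1 := by
      rw [hG', swapped, if_neg e1, if_neg e2, if_pos rfl, if_neg e3]; omega
    rcases hq with hq | ⟨hd', _⟩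
    · rw [hv] at hq
      have hbc : 1 ≤ G s(b,c) := by omega
      have hac : ¬ a < c := fun h => absurd hbc (by have := hcon1 h; omega)
      have hclt : c < a := hca.lt_or_gt.resolve_right hac
      refine Or.inr (Or.inr ⟨?_, ?_⟩)
      · rw [pmax_mk, pmax_mk, max_eq_left (hclt.trans hab).le, max_eq_right hab.le]
      · rw [pmin_mk, pmin_mk, min_eq_right (hclt.trans hab).le, min_eq_left hab.le]
        exact hclt
    · rw [Sym2.mk_isDiag_iff] at hd'
      exact absurd hd'.symm hcb
  · by_cases hq2 : q = s(d,a)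
    · subst hq2
      have e1 : s(d,a) ≠ s(a,b) := sym2_ne (Or.inl hda) (Or.inl hdb)
      have e2 : s(d,a) ≠ s(c,d) := sym2_ne (Or.inl hcd.symm) (Or.inr hca.symm)
      have e3 : s(d,a) ≠ s(b,c) := sym2_ne (Or.inl hdb) (Or.inl hcd.symm)
      have hv : G' s(d,a) = G s(d,a) + 1 := by
        rw [hG', swapped, if_neg e1, if_neg e2, if_neg e3, if_pos rfl]; omega
      rcases hq with hq | ⟨hd', _⟩
      · rw [hv] at hq
        have had : 1 ≤ G s(a,d) := by rw [Sym2.eq_swap]; omega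
        have hbd : ¬ b < d := fun h => absurd had (by have := hcon2 h; omega)
        have hdlt : d < b := hdb.lt_or_gt.resolve_right hbd
        refine Or.inr (Or.inl ?_)
        rw [pmax_mk, pmax_mk, max_eq_right hab.le]
        exact max_lt hdlt hab
      · rw [Sym2.mk_isDiag_iff] at hd'
        exact absurd hd' hda
    · have hle : G' q ≤ G q := swapped_le hq1 hq2
      rcases hq with hq | ⟨hd', hq⟩
      · exact nonsimple_le hlf hqmax q (Or.inl (by omega))
      · rw [diag_zero hlf hd'] at hle
        omega

end Ctx

section Deg
variable [Fintype V] [LinearOrder V] {G : Multigraph V} {a b : V}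

private lemma mdeg_eq (hlf : LoopFree G) (v : V) :
    mdeg G v = ∑ u, G s(v,u) := by rw [mdeg, hlf v, add_zero]

private lemma mdeg_lt (hlf : LoopFree G)
    {x y : V} (_hxy : x ≠ y)
    (hle : ∀ u, u ≠ x → u ≠ y → G s(x,u) ≤ G s(y,u))
    {c : V} (hcx : c ≠ x) (hcy : c ≠ y) (hstrict : G s(x,c) < G s(y,c)) :
    mdeg G x < mdeg G y := by
  rw [mdeg_eq hlf, mdeg_eq hlf]
  rw [← Equiv.sum_comp (Equiv.swap x y) (fun u => G s(x,u))]
  refine Finset.sum_lt_sum (fun i _ => ?_) ⟨c, mem_univ c, ?_⟩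
  · by_cases hix : i = x
    · subst hix
      rw [Equiv.swap_apply_left, Sym2.eq_swap]
    · by_cases hiy : i = y
      · subst hiy
        rw [Equiv.swap_apply_right, hlf x]
        exact Nat.zero_le _
      · rw [Equiv.swap_apply_of_ne_of_ne hix hiy]
        exact hle i hix hiy
  · rw [Equiv.swap_apply_of_ne_of_ne hcx hcy]
    exact hstrict

end Deg

section Pos
variable [Fintype V] [LinearOrder V] {G : Multigraph V} {a b : V}
  (hlf : LoopFree G)
  (hord : ∀ u v : V, mdeg G u < mdeg G v → u < v)
  (hmin : ∀ G' : Multigraph V, Relation.ReflTransGen AdmissibleStep G G' → ¬ GraphLT G' G)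
  (hab : a < b) (hm : 2 ≤ G s(a,b))
  (hqmax : ∀ q, 2 ≤ G q → PairLE q s(a,b))

include hlf hord hmin hab hm hqmax

private lemma lem_bM {x : V} (hax : a < x) (hxb : x < b) : 1 ≤ G s(b,x) := by
  by_contra h0'
  have h0 : G s(b,x) = 0 := by omega
  have hlt : mdeg G x < mdeg G a := by
    refine mdeg_lt hlf hax.ne' (fun u hux hua => ?_) (c := b) hxb.ne' hab.ne' ?_
    · rcases lt_trichotomy u a with h | h | h
      · have hne : ¬ 1 ≤ G s(x,u) := by
          intro h1
          rcases lemB hlf hmin hab hm hqmax (c:=u) (d:=x) h.ne (h.trans hab).ne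
            hax.ne' hxb.ne hux (by rw [Sym2.eq_swap]; exact h1) with
            ⟨h2,_⟩ | ⟨h2,_⟩
          · exact absurd h2 (not_lt.mpr h.le)
          · exact absurd h2 (not_lt.mpr hxb.le)
        omega
      · exact absurd h hua
      · by_cases hub : u = b
        · subst hub
          rw [Sym2.eq_swap, h0]
          exact Nat.zero_le _
        · rcases (show u ≠ b from hub).lt_or_gt with h2 | h2
          · have hne : ¬ 1 ≤ G s(x,u) := by
              intro h1
              rcases lemB hlf hmin hab hm hqmax (c:=x) (d:=u) hax.ne' hxb.ne
                h.ne' hub (Ne.symm hux) h1 with ⟨_,h3⟩ | ⟨h3,_⟩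
              · omega
              · exact absurd h3 (not_lt.mpr h2.le)
            omega
          · by_cases hxu : 1 ≤ G s(x,u)
            · rcases lemB hlf hmin hab hm hqmax (c:=x) (d:=u) hax.ne' hxb.ne
                (hab.trans h2).ne' h2.ne' (Ne.symm hux) hxu with ⟨_,h3⟩ | ⟨_,h3⟩
              · omega
              · calc G s(x,u) ≤ 1 := simple_top hab hqmax h2
                  _ ≤ G s(a,u) := h3
            · omega
    · rw [Sym2.eq_swap, h0]
      omega
  exact absurd (hord _ _ hlt) (not_lt.mpr hax.le)

private lemma lem_aU {v : V} (hv : b < v) : 1 ≤ G s(a,v) := by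
  by_contra h0'
  have h0 : G s(a,v) = 0 := by omega
  have hlt : mdeg G v < mdeg G b := by
    refine mdeg_lt hlf hv.ne' (fun u huv hub => ?_) (c := a) (hab.trans hv).ne hab.ne ?_
    · by_cases hua : u = a
      · subst hua
        rw [Sym2.eq_swap, h0]
        exact Nat.zero_le _
      · rcases lt_trichotomy u a with h | h | h
        · have hne : ¬ 1 ≤ G s(v,u) := by
            intro h1
            rcases lemB hlf hmin hab hm hqmax (c:=u) (d:=v) h.ne (h.trans hab).ne
              (hab.trans hv).ne' hv.ne' huv
              (by rw [Sym2.eq_swap]; exact h1) with ⟨h2,_⟩ | ⟨_,h2⟩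
            · exact absurd h2 (not_lt.mpr h.le)
            · omega
          omega
        · exact absurd h hua
        · by_cases hvu : 1 ≤ G s(v,u)
          · rcases lemB hlf hmin hab hm hqmax (c:=u) (d:=v) hua hub
              (hab.trans hv).ne' hv.ne' huv
              (by rw [Sym2.eq_swap]; exact hvu) with ⟨_,h3⟩ | ⟨_,h3⟩
            · calc G s(v,u) ≤ 1 := by rw [Sym2.eq_swap]; exact simple_top hab hqmax hv
                _ ≤ G s(b,u) := h3
            · omega
          · omega
    · have : G s(v,a) = 0 := by rw [Sym2.eq_swap]; exact h0
      rw [this, Sym2.eq_swap]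
      omega
  exact absurd (hord _ _ hlt) (not_lt.mpr hv.le)

private lemma lem_bU {v : V} (hv : b < v) : 1 ≤ G s(b,v) := by
  by_contra h0'
  have h0 : G s(b,v) = 0 := by omega
  have hlt : mdeg G v < mdeg G a := by
    refine mdeg_lt hlf (hab.trans hv).ne' (fun u huv hua => ?_) (c := b)
      hv.ne hab.ne' ?_
    · by_cases hub : u = b
      · subst hub
        rw [Sym2.eq_swap, h0]
        exact Nat.zero_le _
      · have hnoe : u < b → ¬ 1 ≤ G s(v,u) := by
          intro hultb h1
          rcases lemB hlf hmin hab hm hqmax (c:=v) (d:=u) (hab.trans hv).ne'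
            hv.ne' hua hub (Ne.symm huv) h1 with ⟨_,h3⟩ | ⟨h3,_⟩
          · omega
          · exact absurd h3 (not_lt.mpr hultb.le)
        rcases lt_trichotomy u b with h | h | h
        · have := hnoe h
          omega
        · exact absurd h hub
        · by_cases hvu : 1 ≤ G s(v,u)
          · rcases lemB hlf hmin hab hm hqmax (c:=v) (d:=u) (hab.trans hv).ne'
              hv.ne' hua hub (Ne.symm huv) hvu with ⟨_,h3⟩ | ⟨_,h3⟩
            · omega
            · calc G s(v,u) ≤ 1 := by rw [Sym2.eq_swap]; exact simple_top hab hqmax hv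
                _ ≤ G s(a,u) := h3
          · omega
    · have : G s(v,b) = 0 := by rw [Sym2.eq_swap]; exact h0
      rw [this]
      omega
  exact absurd (hord _ _ hlt) (not_lt.mpr (hab.trans hv).le)

private lemma lem_LU {v : V} (hv : b < v) : ∃ u, u < a ∧ 1 ≤ G s(u,v) := by
  by_contra hno
  push_neg at hno
  have hno' : ∀ u, u < a → G s(v,u) = 0 := by
    intro u hu
    have := hno u hu
    rw [Sym2.eq_swap]
    omega
  have hlt : mdeg G v < mdeg G b := by
    refine mdeg_lt hlf hv.ne' (fun u huv hub => ?_) (c := a) (hab.trans hv).ne hab.ne ?_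
    · rcases lt_trichotomy u a with h | h | h
      · rw [hno' u h]
        exact Nat.zero_le _
      · subst h
        calc G s(v,u) ≤ 1 := by rw [Sym2.eq_swap]; exact simple_top hab hqmax hv
          _ ≤ G s(b,u) := by rw [Sym2.eq_swap]; omega
      · rcases lt_trichotomy u b with h2 | h2 | h2
        · calc G s(v,u) ≤ 1 := by rw [Sym2.eq_swap]; exact simple_top hab hqmax hv
            _ ≤ G s(b,u) := lem_bM hlf hord hmin hab hm hqmax h h2
        · exact absurd h2 hub
        · calc G s(v,u) ≤ 1 := by rw [Sym2.eq_swap]; exact simple_top hab hqmax hv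
            _ ≤ G s(b,u) := lem_bU hlf hord hmin hab hm hqmax h2
    · have h1 : G s(v,a) ≤ 1 := by rw [Sym2.eq_swap]; exact simple_top hab hqmax hv
      have h2 : 2 ≤ G s(b,a) := by rw [Sym2.eq_swap]; exact hm
      omega
  exact absurd (hord _ _ hlt) (not_lt.mpr hv.le)

private lemma lem_Mnbr {x : V} (hax : a < x) (hxb : x < b) :
    ∃ w, a < w ∧ w < b ∧ w ≠ x ∧ 1 ≤ G s(x,w) := by
  by_contra hno
  push_neg at hno
  have hlt : mdeg G x < mdeg G a := by
    refine mdeg_lt hlf hax.ne' (fun u hux hua => ?_) (c := b) hxb.ne' hab.ne' ?_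
    · rcases lt_trichotomy u a with h | h | h
      · have hne : ¬ 1 ≤ G s(x,u) := by
          intro h1
          rcases lemB hlf hmin hab hm hqmax (c:=u) (d:=x) h.ne (h.trans hab).ne
            hax.ne' hxb.ne hux (by rw [Sym2.eq_swap]; exact h1) with
            ⟨h2,_⟩ | ⟨h2,_⟩
          · exact absurd h2 (not_lt.mpr h.le)
          · exact absurd h2 (not_lt.mpr hxb.le)
        omega
      · exact absurd h hua
      · rcases lt_trichotomy u b with h2 | h2 | h2
        · have := hno u h h2 hux
          omega
        · subst h2
          calc G s(x,u) ≤ 1 := by rw [Sym2.eq_swap]; exact simple_bx hab hqmax hax hxb.ne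
            _ ≤ G s(a,u) := by omega
        · calc G s(x,u) ≤ 1 := simple_top hab hqmax h2
            _ ≤ G s(a,u) := lem_aU hlf hord hmin hab hm hqmax h2
    · have h1 : G s(x,b) ≤ 1 := by rw [Sym2.eq_swap]; exact simple_bx hab hqmax hax hxb.ne
      omega
  exact absurd (hord _ _ hlt) (not_lt.mpr hax.le)

private lemma lem_comp2 {u v z w : V} (hua : u < a) (hbv : b < v)
    (huv : 1 ≤ G s(u,v))
    (hza : z ≠ a) (hzb : z ≠ b) (hzu : z ≠ u) (hzv : z ≠ v)
    (hwa : w ≠ a) (hwv : w ≠ v) (hwz : w ≠ z) (hwb : w < b)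
    (hzw : 1 ≤ G s(z,w)) (hvz : G s(v,z) = 0) : False := by
  have hau : a ≠ u := hua.ne'
  have hav : a ≠ v := (hab.trans hbv).ne
  have hbu : b ≠ u := (hua.trans hab).ne'
  have hbvne : b ≠ v := hbv.ne
  have hwbne : w ≠ b := hwb.ne
  have hvu : v ≠ u := (hua.trans (hab.trans hbv)).ne'
  have hav1 : G s(a,v) = 1 :=
    le_antisymm (simple_top hab hqmax hbv) (lem_aU hlf hord hmin hab hm hqmax hbv)
  set G1 := swapped G a b u v with hG1
  set G2 := swapped G1 a v z w with hG2
  have step1 : AdmissibleStep G G1 :=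
    ⟨a, b, u, v, ⟨hau, hav, hbu, hbvne⟩, by omega, huv,
      Or.inr (Or.inr (Or.inl hm)), rfl⟩
  have nav1 : s(a,v) ≠ s(a,b) := sym2_ne (Or.inr hbvne.symm) (Or.inl hab.ne)
  have nav2 : s(a,v) ≠ s(u,v) := sym2_ne (Or.inl hau) (Or.inl hav)
  have nav3 : s(a,v) ≠ s(b,u) := sym2_ne (Or.inl hab.ne) (Or.inl hau)
  have hG1av : G1 s(a,v) = 2 := by
    rw [hG1, swapped, if_neg nav1, if_neg nav2, if_neg nav3,
      if_pos Sym2.eq_swap, hav1]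
  have nzw1 : s(z,w) ≠ s(a,b) := sym2_ne (Or.inl hza) (Or.inl hzb)
  have nzw2 : s(z,w) ≠ s(u,v) := sym2_ne (Or.inl hzu) (Or.inl hzv)
  have nzw3 : s(z,w) ≠ s(b,u) := sym2_ne (Or.inl hzb) (Or.inl hzu)
  have nzw4 : s(z,w) ≠ s(v,a) := sym2_ne (Or.inl hzv) (Or.inl hza)
  have hG1zw : G1 s(z,w) = G s(z,w) := by
    rw [hG1, swapped, if_neg nzw1, if_neg nzw2, if_neg nzw3, if_neg nzw4]
    omega
  have step2 : AdmissibleStep G1 G2 :=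
    ⟨a, v, z, w, ⟨hza.symm, hwa.symm, hzv.symm, hwv.symm⟩, by omega, by omega,
      Or.inr (Or.inr (Or.inl (by omega))), rfl⟩
  refine hmin G2 ((Relation.ReflTransGen.single step1).tail step2) ?_
  have nab1 : s(a,b) ≠ s(u,v) := sym2_ne (Or.inl hau) (Or.inl hav)
  have nab2 : s(a,b) ≠ s(b,u) := sym2_ne (Or.inl hab.ne) (Or.inl hau)
  have nab3 : s(a,b) ≠ s(v,a) := sym2_ne (Or.inl hav) (Or.inr hbvne)
  have hG1ab : G1 s(a,b) = G s(a,b) - 1 := by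
    rw [hG1, swapped, if_pos rfl, if_neg nab1, if_neg nab2, if_neg nab3]; omega
  have mab1 : s(a,b) ≠ s(a,v) := fun h => nav1 h.symm
  have mab2 : s(a,b) ≠ s(z,w) := fun h => nzw1 h.symm
  have mab3 : s(a,b) ≠ s(v,z) := sym2_ne (Or.inl hav) (Or.inl hza.symm)
  have mab4 : s(a,b) ≠ s(w,a) := sym2_ne (Or.inl hwa.symm) (Or.inr hwbne.symm)
  have hG2ab : G2 s(a,b) = G s(a,b) - 1 := by
    rw [hG2, swapped, if_neg mab1, if_neg mab2, if_neg mab3, if_neg mab4, hG1ab]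
    omega
  refine smaller_of hlf hm hqmax (by omega) ?_
  intro q hq
  by_cases hq1 : q = s(b,u)
  · subst hq1
    rcases hq with _ | ⟨hd', _⟩
    · refine Or.inr (Or.inr ⟨?_, ?_⟩)
      · rw [pmax_mk, pmax_mk, max_eq_left (hua.trans hab).le, max_eq_right hab.le]
      · rw [pmin_mk, pmin_mk, min_eq_right (hua.trans hab).le, min_eq_left hab.le]
        exact hua
    · rw [Sym2.mk_isDiag_iff] at hd'
      exact absurd hd' hbu
  · by_cases hq2 : q = s(w,a)
    · subst hq2
      rcases hq with _ | ⟨hd', _⟩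
      · refine Or.inr (Or.inl ?_)
        rw [pmax_mk, pmax_mk, max_eq_right hab.le]
        exact max_lt hwb hab
      · rw [Sym2.mk_isDiag_iff] at hd'
        exact absurd hd' hwa
    · by_cases hq3 : q = s(v,z)
      · subst hq3
        have n1 : s(v,z) ≠ s(a,b) := sym2_ne (Or.inl hav.symm) (Or.inl hbvne.symm)
        have n2 : s(v,z) ≠ s(u,v) := sym2_ne (Or.inl hvu) (Or.inr hzu)
        have n3 : s(v,z) ≠ s(b,u) := sym2_ne (Or.inl hbvne.symm) (Or.inr hzb)
        have n4 : s(v,z) ≠ s(v,a) := sym2_ne (Or.inr hza) (Or.inl hav.symm)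
        have hG1vz : G1 s(v,z) = 0 := by
          rw [hG1, swapped, if_neg n1, if_neg n2, if_neg n3, if_neg n4, hvz]
        have m1 : s(v,z) ≠ s(a,v) := sym2_ne (Or.inl hav.symm) (Or.inr hza)
        have m2 : s(v,z) ≠ s(z,w) := sym2_ne (Or.inl hzv.symm) (Or.inl hwv.symm)
        have m3 : s(v,z) ≠ s(w,a) := sym2_ne (Or.inl hwv.symm) (Or.inl hav.symm)
        have hG2vz : G2 s(v,z) = 1 := by
          rw [hG2, swapped, if_neg m1, if_neg m2, if_pos rfl, if_neg m3, hG1vz]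
        rcases hq with hq | ⟨hd', hq⟩
        · omega
        · rw [Sym2.mk_isDiag_iff] at hd'
          exact absurd hd' hzv.symm
      · by_cases hq4 : q = s(a,v)
        · subst hq4
          have m2 : s(a,v) ≠ s(z,w) := sym2_ne (Or.inl hza.symm) (Or.inl hwa.symm)
          have m3 : s(a,v) ≠ s(v,z) := sym2_ne (Or.inl hav) (Or.inl hza.symm)
          have m4 : s(a,v) ≠ s(w,a) := sym2_ne (Or.inl hwa.symm) (Or.inr hwv.symm)
          have hG2av : G2 s(a,v) = 1 := by
            rw [hG2, swapped, if_pos rfl, if_neg m2, if_neg m3, if_neg m4, hG1av]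
          rcases hq with hq | ⟨hd', hq⟩
          · omega
          · rw [Sym2.mk_isDiag_iff] at hd'
            exact absurd hd' hav
        · have h21 : G2 q ≤ G1 q := swapped_le hq3 hq2
          have h10 : G1 q ≤ G q :=
            swapped_le hq1 (fun h => hq4 (h.trans (Sym2.eq_swap : s(v,a) = s(a,v))))
          rcases hq with hq | ⟨hd', hq⟩
          · exact nonsimple_le hlf hqmax q (Or.inl (by omega))
          · rw [diag_zero hlf hd'] at h10
            omega

private lemma lem_X {u x y : V} (hua : u < a) (hau1 : 1 ≤ G s(u,a))
    (hax : a < x) (hxb : x < b) (hay : a < y) (hyb : y < b) (hxy : x ≠ y)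
    (hexy : 1 ≤ G s(x,y)) : False := by
  have hxa : x ≠ a := hax.ne'
  have hxbne : x ≠ b := hxb.ne
  have hya : y ≠ a := hay.ne'
  have hybne : y ≠ b := hyb.ne
  have hune : u ≠ a := hua.ne
  have hub : u ≠ b := (hua.trans hab).ne
  have hux : u ≠ x := (hua.trans hax).ne
  have huy : u ≠ y := (hua.trans hay).ne
  have hbx1 : G s(b,x) = 1 :=
    le_antisymm (simple_bx hab hqmax hax hxbne)
      (lem_bM hlf hord hmin hab hm hqmax hax hxb)
  set G1 := swapped G a b x y with hG1
  set G2 := swapped G1 x b u a with hG2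
  have step1 : AdmissibleStep G G1 :=
    ⟨a, b, x, y, ⟨hxa.symm, hya.symm, hxbne.symm, hybne.symm⟩, by omega, hexy,
      Or.inr (Or.inr (Or.inl hm)), rfl⟩
  have nxb1 : s(x,b) ≠ s(a,b) := sym2_ne (Or.inl hxa) (Or.inr hab.ne')
  have nxb2 : s(x,b) ≠ s(x,y) := sym2_ne (Or.inr hybne.symm) (Or.inl hxy)
  have nxb3 : s(x,b) ≠ s(y,a) := sym2_ne (Or.inl hxy) (Or.inl hxa)
  have hG1xb : G1 s(x,b) = 2 := by
    rw [hG1, swapped, if_neg nxb1, if_neg nxb2, if_pos Sym2.eq_swap, if_neg nxb3]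
    rw [Sym2.eq_swap, hbx1]
  have nua1 : s(u,a) ≠ s(a,b) := sym2_ne (Or.inl hune) (Or.inl hub)
  have nua2 : s(u,a) ≠ s(x,y) := sym2_ne (Or.inl hux) (Or.inl huy)
  have nua3 : s(u,a) ≠ s(b,x) := sym2_ne (Or.inl hub) (Or.inl hux)
  have nua4 : s(u,a) ≠ s(y,a) := sym2_ne (Or.inl huy) (Or.inl hune)
  have hG1ua : G1 s(u,a) = G s(u,a) := by
    rw [hG1, swapped, if_neg nua1, if_neg nua2, if_neg nua3, if_neg nua4]
    omega
  have step2 : AdmissibleStep G1 G2 :=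
    ⟨x, b, u, a, ⟨hux.symm, hxa, hub.symm, hab.ne'⟩, by omega, by omega,
      Or.inr (Or.inr (Or.inl (by omega))), rfl⟩
  refine hmin G2 ((Relation.ReflTransGen.single step1).tail step2) ?_
  have nab1 : s(a,b) ≠ s(x,y) := sym2_ne (Or.inl hxa.symm) (Or.inl hya.symm)
  have nab2 : s(a,b) ≠ s(b,x) := sym2_ne (Or.inl hab.ne) (Or.inl hxa.symm)
  have nab3 : s(a,b) ≠ s(y,a) := sym2_ne (Or.inl hya.symm) (Or.inr hybne.symm)
  have hG1ab : G1 s(a,b) = G s(a,b) - 1 := by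
    rw [hG1, swapped, if_pos rfl, if_neg nab1, if_neg nab2, if_neg nab3]; omega
  have mab1 : s(a,b) ≠ s(x,b) := fun h => nxb1 h.symm
  have mab2 : s(a,b) ≠ s(u,a) := fun h => nua1 h.symm
  have mab3 : s(a,b) ≠ s(b,u) := sym2_ne (Or.inl hab.ne) (Or.inl hune.symm)
  have mab4 : s(a,b) ≠ s(a,x) := sym2_ne (Or.inr hxbne.symm) (Or.inl hxa.symm)
  have hG2ab : G2 s(a,b) = G s(a,b) - 1 := by
    rw [hG2, swapped, if_neg mab1, if_neg mab2, if_neg mab3, if_neg mab4, hG1ab]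
    omega
  refine smaller_of hlf hm hqmax (by omega) ?_
  intro q hq
  by_cases hq1 : q = s(y,a)
  · subst hq1
    rcases hq with _ | ⟨hd', _⟩
    · refine Or.inr (Or.inl ?_)
      rw [pmax_mk, pmax_mk, max_eq_right hab.le]
      exact max_lt hyb hab
    · rw [Sym2.mk_isDiag_iff] at hd'
      exact absurd hd' hya
  · by_cases hq2 : q = s(b,u)
    · subst hq2
      rcases hq with _ | ⟨hd', _⟩
      · refine Or.inr (Or.inr ⟨?_, ?_⟩)
        · rw [pmax_mk, pmax_mk, max_eq_left (hua.trans hab).le, max_eq_right hab.le]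
        · rw [pmin_mk, pmin_mk, min_eq_right (hua.trans hab).le, min_eq_left hab.le]
          exact hua
      · rw [Sym2.mk_isDiag_iff] at hd'
        exact absurd hd'.symm hub
    · by_cases hq3 : q = s(a,x)
      · subst hq3
        rcases hq with _ | ⟨hd', _⟩
        · refine Or.inr (Or.inl ?_)
          rw [pmax_mk, pmax_mk, max_eq_right hab.le]
          exact max_lt hab hxb
        · rw [Sym2.mk_isDiag_iff] at hd'
          exact absurd hd' hxa.symm
      · by_cases hq4 : q = s(x,b)
        · subst hq4
          have m1 : s(x,b) ≠ s(u,a) := sym2_ne (Or.inl hux.symm) (Or.inl hxa)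
          have m2 : s(x,b) ≠ s(b,u) := sym2_ne (Or.inl hxbne) (Or.inl hux.symm)
          have m3 : s(x,b) ≠ s(a,x) := sym2_ne (Or.inl hxa) (Or.inr hab.ne')
          have hG2xb : G2 s(x,b) = 1 := by
            rw [hG2, swapped, if_pos rfl, if_neg m1, if_neg m2, if_neg m3, hG1xb]
          rcases hq with hq | ⟨hd', hq⟩
          · omega
          · rw [Sym2.mk_isDiag_iff] at hd'
            exact absurd hd' hxbne
        · have h21 : G2 q ≤ G1 q := swapped_le hq2 hq3
          have h10 : G1 q ≤ G q :=
            swapped_le (fun h => hq4 (h.trans (Sym2.eq_swap : s(b,x) = s(x,b)))) hq1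
          rcases hq with hq | ⟨hd', hq⟩
          · exact nonsimple_le hlf hqmax q (Or.inl (by omega))
          · rw [diag_zero hlf hd'] at h10
            omega

private lemma lem_MU {x v : V} (hax : a < x) (hxb : x < b) (hbv : b < v) :
    1 ≤ G s(x,v) := by
  by_contra h0'
  have h0 : G s(v,x) = 0 := by rw [Sym2.eq_swap]; omega
  obtain ⟨u, hua, huv⟩ := lem_LU hlf hord hmin hab hm hqmax hbv
  obtain ⟨w, haw, hwb, hwx, hxw⟩ := lem_Mnbr hlf hord hmin hab hm hqmax hax hxb
  exact lem_comp2 hlf hord hmin hab hm hqmax hua hbv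
    huv
    hax.ne' hxb.ne (hua.trans hax).ne' (hxb.trans hbv).ne
    haw.ne' ((hwb.trans hbv).ne) hwx hwb hxw h0

private lemma lem_UU {v v' : V} (hbv : b < v) (hbv' : b < v') (hne : v ≠ v') :
    1 ≤ G s(v,v') := by
  by_contra h0'
  have h0 : G s(v,v') = 0 := by omega
  obtain ⟨u, hua, huv⟩ := lem_LU hlf hord hmin hab hm hqmax hbv
  by_cases hM : ∃ x, a < x ∧ x < b
  · obtain ⟨x, hax, hxb⟩ := hM
    refine lem_comp2 hlf hord hmin hab hm hqmax hua hbv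
      huv
      (hab.trans hbv').ne' hbv'.ne' ?_ hne.symm
      hax.ne' ((hxb.trans hbv).ne) ?_ hxb
      (by rw [Sym2.eq_swap]; exact lem_MU hlf hord hmin hab hm hqmax hax hxb hbv')
      h0
    · exact (hua.trans (hab.trans hbv')).ne'
    · exact (hxb.trans hbv').ne
  · obtain ⟨w, hwa, hwv'⟩ := lem_LU hlf hord hmin hab hm hqmax hbv'
    refine lem_comp2 hlf hord hmin hab hm hqmax hua hbv
      huv
      (hab.trans hbv').ne' hbv'.ne' (hua.trans (hab.trans hbv')).ne' hne.symm
      hwa.ne ((hwa.trans (hab.trans hbv)).ne) ((hwa.trans (hab.trans hbv')).ne)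
      (hwa.trans hab)
      (by rw [Sym2.eq_swap]; exact hwv') h0

private lemma lem_X2 {u y : V} (hua : u < a) (hay : a < y) (hyb : y < b) :
    G s(u,a) = 0 := by
  by_contra h0'
  have h0 : 1 ≤ G s(u,a) := by omega
  obtain ⟨w, haw, hwb, hwy, hyw⟩ := lem_Mnbr hlf hord hmin hab hm hqmax hay hyb
  exact lem_X hlf hord hmin hab hm hqmax hua h0 hay hyb haw hwb hwy.symm hyw

end Pos


section Count
variable [Fintype V] [LinearOrder V]

private lemma union_split [DecidableEq V] (S T : Finset V)
    (hST : ∀ v, v ∈ T ↔ v ∉ S) (f : V → ℕ) :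
    ∑ u, f u = ∑ u ∈ S, f u + ∑ u ∈ T, f u := by
  rw [← sum_filter_add_sum_filter_not univ (· ∈ S) f]
  congr 1
  · congr 1
    ext v
    simp
  · congr 1
    ext v
    simp [hST]

private lemma sum_split [DecidableEq V] (K : Multigraph V) (hK : LoopFree K)
    (S T : Finset V) (hST : ∀ v, v ∈ T ↔ v ∉ S) :
    ∑ v ∈ S, mdeg K v =
      (∑ v ∈ S, ∑ u ∈ S, K s(v,u)) + ∑ u ∈ T, ∑ v ∈ S, K s(u,v) := by
  calc ∑ v ∈ S, mdeg K v
      = ∑ v ∈ S, ∑ u, K s(v,u) :=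
        sum_congr rfl fun v _ => mdeg_eq hK v
    _ = ∑ v ∈ S, (∑ u ∈ S, K s(v,u) + ∑ u ∈ T, K s(v,u)) :=
        sum_congr rfl fun v _ => union_split S T hST _
    _ = (∑ v ∈ S, ∑ u ∈ S, K s(v,u)) + ∑ v ∈ S, ∑ u ∈ T, K s(v,u) :=
        sum_add_distrib
    _ = _ := by
        congr 1
        rw [Finset.sum_comm]
        exact sum_congr rfl fun u _ => sum_congr rfl fun v _ => by rw [Sym2.eq_swap]

private lemma inside_le (K : Multigraph V) (h0 : ∀ v, K s(v,v) = 0)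
    (h1 : ∀ e, K e ≤ 1) (F : Finset V) :
    ∑ v ∈ F, ∑ u ∈ F, K s(v,u) ≤ F.card * (F.card - 1) := by
  calc ∑ v ∈ F, ∑ u ∈ F, K s(v,u) ≤ ∑ _v ∈ F, (F.card - 1) := by
        refine sum_le_sum fun v hv => ?_
        calc ∑ u ∈ F, K s(v,u)
            = K s(v,v) + ∑ u ∈ F.erase v, K s(v,u) :=
              (Finset.add_sum_erase F _ hv).symm
          _ = ∑ u ∈ F.erase v, K s(v,u) := by rw [h0 v, zero_add]
          _ ≤ (F.erase v).card • 1 :=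
              Finset.sum_le_card_nsmul _ _ 1 fun u _ => h1 _
          _ = F.card - 1 := by rw [smul_eq_mul, mul_one, card_erase_of_mem hv]
    _ = F.card * (F.card - 1) := by rw [sum_const, smul_eq_mul]

private lemma inside_ge (K : Multigraph V) (F : Finset V)
    (h : ∀ v ∈ F, ∀ u ∈ F, u ≠ v → 1 ≤ K s(v,u)) :
    F.card * (F.card - 1) ≤ ∑ v ∈ F, ∑ u ∈ F, K s(v,u) := by
  calc F.card * (F.card - 1) = ∑ _v ∈ F, (F.card - 1) := by rw [sum_const, smul_eq_mul]
    _ ≤ ∑ v ∈ F, ∑ u ∈ F, K s(v,u) := by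
        refine sum_le_sum fun v hv => ?_
        calc F.card - 1 = (F.erase v).card • 1 := by
              rw [smul_eq_mul, mul_one, card_erase_of_mem hv]
          _ ≤ ∑ u ∈ F.erase v, K s(v,u) :=
              Finset.card_nsmul_le_sum _ _ 1 fun u hu =>
                h v hv u (mem_of_mem_erase hu) (ne_of_mem_erase hu)
          _ ≤ ∑ u ∈ F, K s(v,u) :=
              sum_le_sum_of_subset (erase_subset _ _)

private lemma cross_le_deg (K : Multigraph V) (u : V) (F : Finset V) :
    ∑ v ∈ F, K s(u,v) ≤ mdeg K u := by
  calc ∑ v ∈ F, K s(u,v) ≤ ∑ v, K s(u,v) :=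
        sum_le_sum_of_subset (subset_univ F)
    _ ≤ mdeg K u := by rw [mdeg]; omega

private lemma cross_le_card (K : Multigraph V) (h1 : ∀ e, K e ≤ 1) (u : V)
    (F : Finset V) : ∑ v ∈ F, K s(u,v) ≤ F.card := by
  calc ∑ v ∈ F, K s(u,v) ≤ F.card • 1 :=
        Finset.sum_le_card_nsmul _ _ 1 fun v _ => h1 _
    _ = F.card := by rw [smul_eq_mul, mul_one]

end Count

end EGAux

/-- a non-simple loop-free multigraph that cannot be transformed into a
smaller graph by any finite sequence of admissible double edge swaps has a
non-graphical degree sequence. -/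
theorem minimal_nonsimple_not_graphical [Fintype V] [LinearOrder V]
    (G : Multigraph V) (hlf : LoopFree G) (hns : ¬ IsSimpleMG G)
    (hord : ∀ u v : V, mdeg G u < mdeg G v → u < v)
    (hmin : ∀ G' : Multigraph V, Relation.ReflTransGen AdmissibleStep G G' →
      ¬ GraphLT G' G) :
    ¬ GraphicalDeg (mdeg G) := by
  rintro ⟨H, ⟨Hloop, Hle⟩, Hdeg⟩
  -- a maximal multiple edge s(a,b)
  have hex : ∃ e, 2 ≤ G e := by
    by_contra h
    push_neg at h
    exact hns ⟨hlf, fun e => by have := h e; omega⟩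
  obtain ⟨e0, he0⟩ := hex
  obtain ⟨p, hpmem, hpmax'⟩ :=
    Finset.exists_max_image (univ.filter (fun q => 2 ≤ G q)) pkey
      ⟨e0, mem_filter.mpr ⟨mem_univ _, he0⟩⟩
  have hm0 : 2 ≤ G p := (mem_filter.mp hpmem).2
  have hqmax0 : ∀ q, 2 ≤ G q → PairLE q p := fun q hq =>
    pairLE_iff_key.mpr (hpmax' q (mem_filter.mpr ⟨mem_univ _, hq⟩))
  set a := pmin p with ha
  set b := pmax p with hb
  have hpe : s(a,b) = p := sym2_eta p
  have hab : a < b := by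
    have hle : a ≤ b := by
      rw [ha, hb]
      induction p using Sym2.ind with
      | _ x y => exact min_le_max
    rcases lt_or_eq_of_le hle with h | h
    · exact h
    · exfalso
      have hdg : p.IsDiag := by
        rw [← hpe, h]
        exact Sym2.mk_isDiag_iff.mpr rfl
      rw [diag_zero hlf hdg] at hm0
      omega
  rw [← hpe] at hm0 hqmax0
  -- structure lemmas
  have hbM : ∀ {x : V}, a < x → x < b → 1 ≤ G s(b,x) :=
    fun hax hxb => lem_bM hlf hord hmin hab hm0 hqmax0 hax hxb
  have haU : ∀ {v : V}, b < v → 1 ≤ G s(a,v) :=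
    fun h => lem_aU hlf hord hmin hab hm0 hqmax0 h
  have hbU : ∀ {v : V}, b < v → 1 ≤ G s(b,v) :=
    fun h => lem_bU hlf hord hmin hab hm0 hqmax0 h
  have hMU : ∀ {x v : V}, a < x → x < b → b < v → 1 ≤ G s(x,v) :=
    fun h1 h2 h3 => lem_MU hlf hord hmin hab hm0 hqmax0 h1 h2 h3
  have hUU : ∀ {v v' : V}, b < v → b < v' → v ≠ v' → 1 ≤ G s(v,v') :=
    fun h1 h2 h3 => lem_UU hlf hord hmin hab hm0 hqmax0 h1 h2 h3
  have hLL : ∀ u w : V, u < a → w < a → u ≠ w → G s(u,w) = 0 := by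
    intro u w hu hw hne
    by_contra h
    rcases lemB hlf hmin hab hm0 hqmax0 (c:=u) (d:=w) hu.ne (hu.trans hab).ne
      hw.ne (hw.trans hab).ne hne (by omega) with ⟨h2,_⟩ | ⟨h2,_⟩
    · exact absurd h2 (not_lt.mpr hu.le)
    · exact absurd h2 (not_lt.mpr (hw.trans hab).le)
  by_cases hM : ∃ x, a < x ∧ x < b
  · -- Case B : some vertex strictly between a and b
    obtain ⟨x0, hax0, hx0b⟩ := hM
    have hX : ∀ u, u < a → G s(u,a) = 0 := fun u hu =>
      lem_X2 hlf hord hmin hab hm0 hqmax0 hu hax0 hx0b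
    have hLM : ∀ u w : V, u < a → a < w → w < b → G s(u,w) = 0 := by
      intro u w hu haw hwb
      by_contra h
      rcases lemB hlf hmin hab hm0 hqmax0 (c:=u) (d:=w) hu.ne (hu.trans hab).ne
        haw.ne' hwb.ne ((hu.trans haw).ne) (by omega) with ⟨h2,_⟩ | ⟨h2,_⟩
      · exact absurd h2 (not_lt.mpr hu.le)
      · exact absurd h2 (not_lt.mpr hwb.le)
    set S : Finset V := univ.filter (fun v => b ≤ v) with hS
    set T : Finset V := univ.filter (fun v => ¬ b ≤ v) with hT
    have hST : ∀ v, v ∈ T ↔ v ∉ S := by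
      intro v
      rw [hS, hT, mem_filter, mem_filter]
      simp
    set k := S.card with hk
    have hbS : b ∈ S := by
      rw [hS]
      exact mem_filter.mpr ⟨mem_univ _, le_refl _⟩
    have haT : a ∈ T := by
      rw [hT]
      exact mem_filter.mpr ⟨mem_univ _, not_le.mpr hab⟩
    have hk1 : 1 ≤ k := by
      rw [hk]
      exact card_pos.mpr ⟨b, hbS⟩
    have hmemS : ∀ {v : V}, v ∈ S → b ≤ v := by
      intro v hv
      rw [hS] at hv
      exact (mem_filter.mp hv).2
    have hmemT : ∀ {v : V}, v ∈ T → v < b := by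
      intro v hv
      rw [hT] at hv
      exact not_le.mp (mem_filter.mp hv).2
    have hGin : k * (k-1) ≤ ∑ v ∈ S, ∑ u ∈ S, G s(v,u) := by
      refine inside_ge G S fun v hv u hu hne => ?_
      by_cases hvb : v = b
      · subst hvb
        exact hbU (lt_of_le_of_ne (hmemS hu) (Ne.symm hne))
      · have hvb' : b < v := lt_of_le_of_ne (hmemS hv) (Ne.symm hvb)
        by_cases hub : u = b
        · subst hub
          rw [Sym2.eq_swap]
          exact hbU hvb'
        · exact hUU hvb' (lt_of_le_of_ne (hmemS hu) (Ne.symm hub)) (Ne.symm hne)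
    have hterm : ∀ u ∈ T, u ≠ a → min (mdeg G u) k ≤ ∑ v ∈ S, G s(u,v) := by
      intro u hu hua
      have hub : u < b := hmemT hu
      rcases hua.lt_or_gt with h | h
      · have hzero : ∑ v ∈ T, G s(u,v) = 0 := by
          refine sum_eq_zero fun v hv => ?_
          have hvb : v < b := hmemT hv
          by_cases hvu : v = u
          · rw [hvu]
            exact hlf u
          · rcases lt_trichotomy v a with h2 | h2 | h2
            · exact hLL u v h h2 (Ne.symm hvu)
            · subst h2
              exact hX u h
            · exact hLM u v h h2 hvb
        have heq : mdeg G u = ∑ v ∈ S, G s(u,v) := by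
          rw [mdeg_eq hlf u, union_split S T hST (fun v => G s(u,v)), hzero, add_zero]
        exact le_trans (min_le_left _ _) heq.le
      · calc min (mdeg G u) k ≤ k := min_le_right _ _
          _ = S.card • 1 := by rw [smul_eq_mul, mul_one, hk]
          _ ≤ ∑ v ∈ S, G s(u,v) := by
              refine Finset.card_nsmul_le_sum _ _ _ fun v hv => ?_
              by_cases hvb : v = b
              · subst hvb
                rw [Sym2.eq_swap]
                exact hbM h hub
              · exact hMU h hub (lt_of_le_of_ne (hmemS hv) (Ne.symm hvb))
    have hterma : min (mdeg G a) k + 1 ≤ ∑ v ∈ S, G s(a,v) := by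
      have h1 : ∑ v ∈ S, G s(a,v) = G s(a,b) + ∑ v ∈ S.erase b, G s(a,v) :=
        (Finset.add_sum_erase S _ hbS).symm
      have h2 : (S.erase b).card • 1 ≤ ∑ v ∈ S.erase b, G s(a,v) :=
        Finset.card_nsmul_le_sum _ _ _ fun v hv =>
          haU (lt_of_le_of_ne (hmemS (mem_of_mem_erase hv))
            (Ne.symm (ne_of_mem_erase hv)))
      have h3 : (S.erase b).card = k - 1 := by rw [card_erase_of_mem hbS, hk]
      have h4 : min (mdeg G a) k ≤ k := min_le_right _ _
      rw [smul_eq_mul, mul_one, h3] at h2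
      omega
    have hGcr : (∑ u ∈ T, min (mdeg G u) k) + 1 ≤ ∑ u ∈ T, ∑ v ∈ S, G s(u,v) := by
      have e1 : ∑ u ∈ T, min (mdeg G u) k =
          min (mdeg G a) k + ∑ u ∈ T.erase a, min (mdeg G u) k :=
        (Finset.add_sum_erase T _ haT).symm
      have e2 : ∑ u ∈ T, ∑ v ∈ S, G s(u,v) =
          (∑ v ∈ S, G s(a,v)) + ∑ u ∈ T.erase a, ∑ v ∈ S, G s(u,v) :=
        (Finset.add_sum_erase T _ haT).symm
      have e3 : ∑ u ∈ T.erase a, min (mdeg G u) k ≤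
          ∑ u ∈ T.erase a, ∑ v ∈ S, G s(u,v) :=
        sum_le_sum fun u hu => hterm u (mem_of_mem_erase hu) (ne_of_mem_erase hu)
      omega
    have hHin : ∑ v ∈ S, ∑ u ∈ S, H s(v,u) ≤ k * (k-1) := by
      rw [hk]
      exact inside_le H Hloop Hle S
    have hHcr : ∑ u ∈ T, ∑ v ∈ S, H s(u,v) ≤ ∑ u ∈ T, min (mdeg G u) k := by
      refine sum_le_sum fun u _ => le_min ?_ ?_
      · exact le_trans (cross_le_deg H u S) (le_of_eq (Hdeg u))
      · rw [hk]
        exact cross_le_card H Hle u S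
    have hsG := sum_split G hlf S T hST
    have hsH := sum_split H Hloop S T hST
    have hHG : ∑ v ∈ S, mdeg H v = ∑ v ∈ S, mdeg G v :=
      sum_congr rfl fun v _ => Hdeg v
    omega
  · -- Case A : no vertex strictly between a and b
    push_neg at hM
    have hbx : ∀ x, a < x → b ≤ x := fun x hx => hM x hx
    set S : Finset V := univ.filter (fun v => a ≤ v) with hS
    set T : Finset V := univ.filter (fun v => ¬ a ≤ v) with hT
    have hST : ∀ v, v ∈ T ↔ v ∉ S := by
      intro v
      rw [hS, hT, mem_filter, mem_filter]
      simp
    set k := S.card with hk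
    have haS : a ∈ S := by
      rw [hS]
      exact mem_filter.mpr ⟨mem_univ _, le_refl _⟩
    have hbS : b ∈ S := by
      rw [hS]
      exact mem_filter.mpr ⟨mem_univ _, hab.le⟩
    have hmemS : ∀ {v : V}, v ∈ S → a ≤ v := by
      intro v hv
      rw [hS] at hv
      exact (mem_filter.mp hv).2
    have hmemT : ∀ {v : V}, v ∈ T → v < a := by
      intro v hv
      rw [hT] at hv
      exact not_le.mp (mem_filter.mp hv).2
    have hk2 : 2 ≤ k := by
      rw [hk]
      exact Finset.one_lt_card.mpr ⟨a, haS, b, hbS, hab.ne⟩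
    have hbSa : b ∈ S.erase a := mem_erase.mpr ⟨hab.ne', hbS⟩
    have hcr_eq : ∀ u ∈ T, ∑ v ∈ S, G s(u,v) = mdeg G u := by
      intro u hu
      have hua : u < a := hmemT hu
      have hzero : ∑ v ∈ T, G s(u,v) = 0 := by
        refine sum_eq_zero fun v hv => ?_
        have hva : v < a := hmemT hv
        by_cases hvu : v = u
        · rw [hvu]
          exact hlf u
        · exact hLL u v hua hva (Ne.symm hvu)
      rw [mdeg_eq hlf u, union_split S T hST (fun v => G s(u,v)), hzero, add_zero]
    have hinnera : k ≤ ∑ u ∈ S, G s(a,u) := by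
      have h1 : ∑ u ∈ S, G s(a,u) = G s(a,a) + ∑ u ∈ S.erase a, G s(a,u) :=
        (Finset.add_sum_erase S _ haS).symm
      have h2 : ∑ u ∈ S.erase a, G s(a,u) =
          G s(a,b) + ∑ u ∈ (S.erase a).erase b, G s(a,u) :=
        (Finset.add_sum_erase _ _ hbSa).symm
      have h3 : ((S.erase a).erase b).card • 1 ≤ ∑ u ∈ (S.erase a).erase b, G s(a,u) := by
        refine Finset.card_nsmul_le_sum _ _ _ fun u hu => ?_
        have hu1 : u ≠ b := ne_of_mem_erase hu
        have hu2 : u ∈ S.erase a := mem_of_mem_erase hu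
        have hu3 : u ≠ a := ne_of_mem_erase hu2
        have hu4 : a ≤ u := hmemS (mem_of_mem_erase hu2)
        have hu5 : b < u :=
          lt_of_le_of_ne (hbx u (lt_of_le_of_ne hu4 (Ne.symm hu3))) (Ne.symm hu1)
        exact haU hu5
      have h4 : ((S.erase a).erase b).card = k - 1 - 1 := by
        rw [card_erase_of_mem hbSa, card_erase_of_mem haS, hk]
      have h0 : G s(a,a) = 0 := hlf a
      rw [smul_eq_mul, mul_one, h4] at h3
      omega
    have hinner : ∀ v ∈ S.erase a, (k-1) ≤ ∑ u ∈ S, G s(v,u) := by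
      intro v hv
      have hva : v ≠ a := ne_of_mem_erase hv
      have hvS : v ∈ S := mem_of_mem_erase hv
      have hav : a < v := lt_of_le_of_ne (hmemS hvS) (Ne.symm hva)
      have hbv : b ≤ v := hbx v hav
      calc (k-1) = (S.erase v).card • 1 := by
            rw [smul_eq_mul, mul_one, card_erase_of_mem hvS, hk]
        _ ≤ ∑ u ∈ S.erase v, G s(v,u) := by
            refine Finset.card_nsmul_le_sum _ _ _ fun u hu => ?_
            have huv : u ≠ v := ne_of_mem_erase hu
            have huS : u ∈ S := mem_of_mem_erase hu
            by_cases hua : u = a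
            · subst hua
              rcases hbv.lt_or_eq with h | h
              · rw [Sym2.eq_swap]
                exact haU h
              · rw [← h, Sym2.eq_swap]
                omega
            · have hau : a < u := lt_of_le_of_ne (hmemS huS) (Ne.symm hua)
              have hbu : b ≤ u := hbx u hau
              by_cases hvb : v = b
              · subst hvb
                exact hbU (lt_of_le_of_ne hbu (fun h => huv h.symm))
              · have hbv' : b < v := lt_of_le_of_ne hbv (Ne.symm hvb)
                by_cases hub : u = b
                · subst hub
                  rw [Sym2.eq_swap]
                  exact hbU hbv'
                · exact hUU hbv' (lt_of_le_of_ne hbu (Ne.symm hub)) (Ne.symm huv)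
        _ ≤ ∑ u ∈ S, G s(v,u) := sum_le_sum_of_subset (erase_subset _ _)
    have hGin : k * (k-1) + 1 ≤ ∑ v ∈ S, ∑ u ∈ S, G s(v,u) := by
      have e : ∑ v ∈ S, ∑ u ∈ S, G s(v,u) =
          (∑ u ∈ S, G s(a,u)) + ∑ v ∈ S.erase a, ∑ u ∈ S, G s(v,u) :=
        (Finset.add_sum_erase S _ haS).symm
      have h5 : (S.erase a).card • (k-1) ≤ ∑ v ∈ S.erase a, ∑ u ∈ S, G s(v,u) :=
        Finset.card_nsmul_le_sum _ _ _ hinner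
      have h6 : (S.erase a).card = k - 1 := by rw [card_erase_of_mem haS, hk]
      rw [smul_eq_mul, h6] at h5
      have hkey : k * (k-1) + 1 ≤ k + (k-1) * (k-1) := by
        obtain ⟨m, hm⟩ : ∃ m, k = m + 2 := ⟨k - 2, by omega⟩
        rw [hm]
        have hm1 : m + 2 - 1 = m + 1 := rfl
        rw [hm1]
        exact le_of_eq (by ring)
      omega
    have hHin : ∑ v ∈ S, ∑ u ∈ S, H s(v,u) ≤ k * (k-1) := by
      rw [hk]
      exact inside_le H Hloop Hle S
    have hHcr : ∑ u ∈ T, ∑ v ∈ S, H s(u,v) ≤ ∑ u ∈ T, mdeg G u :=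
      sum_le_sum fun u _ => le_trans (cross_le_deg H u S) (le_of_eq (Hdeg u))
    have hGcr : ∑ u ∈ T, ∑ v ∈ S, G s(u,v) = ∑ u ∈ T, mdeg G u :=
      sum_congr rfl hcr_eq
    have hsG := sum_split G hlf S T hST
    have hsH := sum_split H Hloop S T hST
    have hHG : ∑ v ∈ S, mdeg H v = ∑ v ∈ S, mdeg G v :=
      sum_congr rfl fun v _ => Hdeg v
    omega
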